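/- Let β be a positive integer and m ≥ 1 a real number. Let x_1,…,x_β be i.i.d. arcsine-distributed random variables, d uniform on {−1,+1}, and h a Nakagami-m amplitude, all mutually independent. Let Y = h·(1+d)·Σ_{k=1}^{β} x_k (the correlator output of a DCSK symbol). Then for any reals ε₁, ε₂, the harvested DC satisfies ε₁·E[Y²] + ε₂·E[Y⁴] = ε₁·β + ε₂·(3(1+m)/m)·β·(2β−1). -/

import Mathlib

/-
Independence factors the moments of the correlator output as
E[Y^j] = E[h^j] · E[(1+d)^j] · E[S^j] with S = ∑ x_k. The arcsine law is the law of sin θ with θ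
uniform on (−π/2, π/2), so Wallis' recursion gives E[x²] = 1/2 and E[x⁴] = 3/8; expanding
(x + S)^n binomially over independent centred summands then gives E[S²] = β/2 and
E[S⁴] = 3β(2β−1)/8. The Gamma integral gives the Nakagami moments E[h²] = 1, E[h⁴] = (1+m)/m,
and E[(1+d)²] = 2, E[(1+d)⁴] = 8.
-/

open MeasureTheory ProbabilityTheory
open scoped ENNReal

/-- The arcsine (Chebyshev invariant) distribution on (−1,1), with density
1/(π√(1−x²)) for |x| < 1 and 0 otherwise. -/
noncomputable def arcsineMeasure : Measure ℝ :=
  volume.withDensity fun x =>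
    ENNReal.ofReal (if |x| < 1 then 1 / (Real.pi * Real.sqrt (1 - x ^ 2)) else 0)

/-- The uniform distribution on {−1, +1}. -/
noncomputable def rademacherMeasure : Measure ℝ :=
  (1 / 2 : ℝ≥0∞) • Measure.dirac (-1) + (1 / 2 : ℝ≥0∞) • Measure.dirac 1

/-- The distribution of a unit-mean-power Nakagami-m amplitude, with density
2 m^m z^{2m−1} e^{−m z²}/Γ(m) for z ≥ 0 and 0 otherwise. -/
noncomputable def nakagamiMeasure (m : ℝ) : Measure ℝ :=
  volume.withDensity fun z =>
    ENNReal.ofReal (if 0 ≤ z then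
      2 * m ^ m * z ^ (2 * m - 1) * Real.exp (-m * z ^ 2) / Real.Gamma m else 0)

open Finset

section Moments

variable {Ω : Type*} [MeasurableSpace Ω] {P : Measure Ω}

lemma MeasureTheory.MemLp.integrable_pow_of_le [IsFiniteMeasure P] {f : Ω → ℝ} {n q : ℕ}
    (hf : MemLp f n P) (hq : q ≤ n) : Integrable (fun ω => f ω ^ q) P :=
  (hf.mono_exponent (by exact_mod_cast hq)).integrable_norm_pow'.mono'
    (hf.aestronglyMeasurable.pow q) (ae_of_all _ fun ω => by simp [norm_pow])

lemma ProbabilityTheory.IndepFun.integral_add_pow [IsFiniteMeasure P] {X Y : Ω → ℝ}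
    (hXY : IndepFun X Y P) {n : ℕ} (hX : MemLp X n P) (hY : MemLp Y n P) :
    ∫ ω, (X ω + Y ω) ^ n ∂P
      = ∑ k ∈ range (n + 1), (∫ ω, X ω ^ k ∂P) * (∫ ω, Y ω ^ (n - k) ∂P) * n.choose k := by
  have hpow (k : ℕ) : IndepFun (fun ω => X ω ^ k) (fun ω => Y ω ^ (n - k)) P :=
    hXY.comp (measurable_id.pow_const k) (measurable_id.pow_const (n - k))
  simp_rw [add_pow]
  rw [integral_finsetSum]
  · refine sum_congr rfl fun k _ => ?_
    rw [integral_mul_const, (hpow k).integral_fun_mul_eq_mul_integral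
      (hX.aestronglyMeasurable.pow k) (hY.aestronglyMeasurable.pow (n - k))]
  · intro k hk
    have hkn : k ≤ n := Nat.lt_succ_iff.1 (mem_range.1 hk)
    exact ((hpow k).integrable_mul (hX.integrable_pow_of_le hkn)
      (hY.integrable_pow_of_le (Nat.sub_le n k))).mul_const _

lemma ProbabilityTheory.iIndepFun.indepFun_sumElim {ι κ 𝓧 : Type*} [Fintype ι] [Fintype κ]
    [MeasurableSpace 𝓧] {X : ι → Ω → 𝓧} {W : κ → Ω → 𝓧} (h : iIndepFun (Sum.elim X W) P)
    (hX : ∀ i, Measurable (X i)) (hW : ∀ k, Measurable (W k)) :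
    IndepFun (fun ω i => X i ω) (fun ω k => W k ω) P := by
  have hdisj : Disjoint (univ.map .inl : Finset (ι ⊕ κ)) (univ.map .inr) := by
    simp [disjoint_left]
  exact (h.indepFun_finset _ _ hdisj (Sum.forall.2 ⟨hX, hW⟩)).comp
    (φ := fun v i => v ⟨.inl i, by simp⟩) (ψ := fun v k => v ⟨.inr k, by simp⟩)
    (measurable_pi_lambda _ fun _ => measurable_pi_apply _)
    (measurable_pi_lambda _ fun _ => measurable_pi_apply _)

lemma integral_correlator_pow {ι : Type*} [Fintype ι] {x : ι → Ω → ℝ} {d h : Ω → ℝ}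
    (hx : ∀ k, Measurable (x k)) (hd : Measurable d) (hh : Measurable h)
    (hindep : iIndepFun (Sum.elim x ![d, h]) P) (j : ℕ) :
    ∫ ω, (h ω * (1 + d ω) * ∑ k, x k ω) ^ j ∂P
      = (∫ ω, h ω ^ j ∂P) * (∫ ω, (1 + d ω) ^ j ∂P) * ∫ ω, (∑ k, x k ω) ^ j ∂P := by
  have hblocks := hindep.indepFun_sumElim hx (Fin.forall_fin_two.2 ⟨hd, hh⟩)
  have hdh : IndepFun d h P :=
    (hindep.precomp Sum.inr_injective).indepFun (show (0 : Fin 2) ≠ 1 by decide)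
  have hfactor := (hblocks.comp (φ := fun v => (∑ k, v k) ^ j)
    (ψ := fun w => (1 + w 0) ^ j * w 1 ^ j) (by fun_prop) (by fun_prop)).symm
  have hdh_pow := hdh.comp (φ := fun t => (1 + t) ^ j) (ψ := fun t => t ^ j)
    (by fun_prop) (by fun_prop)
  calc ∫ ω, (h ω * (1 + d ω) * ∑ k, x k ω) ^ j ∂P
      = ∫ ω, ((1 + d ω) ^ j * h ω ^ j) * (∑ k, x k ω) ^ j ∂P := by
        congr with ω; rw [mul_pow, mul_pow]; ring
    _ = (∫ ω, (1 + d ω) ^ j * h ω ^ j ∂P) * ∫ ω, (∑ k, x k ω) ^ j ∂P :=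
        hfactor.integral_fun_mul_eq_mul_integral
          ((hd.const_add 1).pow_const j |>.mul (hh.pow_const j)).aestronglyMeasurable
          (by fun_prop)
    _ = (∫ ω, (1 + d ω) ^ j ∂P) * (∫ ω, h ω ^ j ∂P) * ∫ ω, (∑ k, x k ω) ^ j ∂P := by
        congr 1
        exact hdh_pow.integral_fun_mul_eq_mul_integral (by fun_prop) (by fun_prop)
    _ = _ := by ring

variable {ι : Type*} {X : ι → Ω → ℝ}

lemma ProbabilityTheory.iIndepFun.indepFun_finsetSum_apply_of_notMem (hX : iIndepFun X P)
    (hmeas : ∀ i, Measurable (X i)) {s : Finset ι} {a : ι} (ha : a ∉ s) :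
    IndepFun (X a) (fun ω => ∑ i ∈ s, X i ω) P := by
  simpa only [Finset.sum_fn] using (hX.indepFun_finsetSum_of_notMem hmeas ha).symm

lemma integral_finsetSum_eq_zero {s : Finset ι} (hint : ∀ i, Integrable (X i) P)
    (hmean : ∀ i, ∫ ω, X i ω ∂P = 0) : ∫ ω, ∑ i ∈ s, X i ω ∂P = 0 := by
  simp [integral_finsetSum s fun i _ => hint i, hmean]

variable [IsProbabilityMeasure P]

lemma integral_finsetSum_pow_two {σ2 : ℝ} (hX : iIndepFun X P) (hmeas : ∀ i, Measurable (X i))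
    (hL2 : ∀ i, MemLp (X i) 2 P) (hmean : ∀ i, ∫ ω, X i ω ∂P = 0)
    (hvar : ∀ i, ∫ ω, X i ω ^ 2 ∂P = σ2) (s : Finset ι) :
    ∫ ω, (∑ i ∈ s, X i ω) ^ 2 ∂P = #s * σ2 := by
  induction s using Finset.cons_induction with
  | empty => simp
  | cons a s ha ih =>
    simp only [sum_cons]
    rw [(hX.indepFun_finsetSum_apply_of_notMem hmeas ha).integral_add_pow (hL2 a)
      (memLp_finsetSum s fun i _ => hL2 i)]
    simp [sum_range_succ, ih, hmean, hvar,
      integral_finsetSum_eq_zero (s := s) (fun i => (hL2 i).integrable one_le_two) hmean]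
    ring

lemma integral_finsetSum_pow_four {σ2 μ4 : ℝ} (hX : iIndepFun X P)
    (hmeas : ∀ i, Measurable (X i)) (hL4 : ∀ i, MemLp (X i) 4 P)
    (hmean : ∀ i, ∫ ω, X i ω ∂P = 0) (hvar : ∀ i, ∫ ω, X i ω ^ 2 ∂P = σ2)
    (hμ4 : ∀ i, ∫ ω, X i ω ^ 4 ∂P = μ4) (s : Finset ι) :
    ∫ ω, (∑ i ∈ s, X i ω) ^ 4 ∂P = #s * μ4 + 3 * #s * (#s - 1) * σ2 ^ 2 := by
  have hL2 (i : ι) : MemLp (X i) 2 P := (hL4 i).mono_exponent (by norm_num)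
  induction s using Finset.cons_induction with
  | empty => simp
  | cons a s ha ih =>
    simp only [sum_cons]
    rw [(hX.indepFun_finsetSum_apply_of_notMem hmeas ha).integral_add_pow (hL4 a)
      (memLp_finsetSum s fun i _ => hL4 i)]
    simp [sum_range_succ, Nat.choose_two_right, ih, hmean, hvar, hμ4,
      integral_finsetSum_pow_two hX hmeas hL2 hmean hvar s,
      integral_finsetSum_eq_zero (s := s) (fun i => (hL4 i).integrable (by norm_num)) hmean]
    ring

end Moments

section Laws

open Real Set

lemma integral_withDensity_ofReal {α : Type*} [MeasurableSpace α] {μ : Measure α} {f : α → ℝ}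
    (hf : Measurable f) (hf0 : ∀ x, 0 ≤ f x) (g : α → ℝ) :
    ∫ x, g x ∂μ.withDensity (fun x => ENNReal.ofReal (f x)) = ∫ x, f x * g x ∂μ := by
  rw [integral_withDensity_eq_integral_toReal_smul hf.ennreal_ofReal
    (ae_of_all _ fun _ => ENNReal.ofReal_lt_top)]
  simp [ENNReal.toReal_ofReal (hf0 _)]

noncomputable def arcsineDensity (x : ℝ) : ℝ :=
  if |x| < 1 then 1 / (π * Real.sqrt (1 - x ^ 2)) else 0

lemma arcsineMeasure_eq_withDensity :
    arcsineMeasure = volume.withDensity fun x => ENNReal.ofReal (arcsineDensity x) := rfl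

lemma measurable_arcsineDensity : Measurable arcsineDensity :=
  Measurable.ite (measurableSet_lt (by fun_prop) measurable_const) (by fun_prop) measurable_const

lemma arcsineDensity_nonneg (x : ℝ) : 0 ≤ arcsineDensity x := by
  unfold arcsineDensity; split <;> positivity

lemma arcsineDensity_sin {θ : ℝ} (hθ : θ ∈ Ioo (-(π / 2)) (π / 2)) :
    arcsineDensity (sin θ) = 1 / (π * cos θ) := by
  have hcos : 0 < cos θ := cos_pos_of_mem_Ioo hθ
  have hsin : |sin θ| < 1 := by
    rw [← sq_lt_one_iff_abs_lt_one, sin_sq]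
    nlinarith
  rw [arcsineDensity, if_pos hsin, ← cos_eq_sqrt_one_sub_sin_sq hθ.1.le hθ.2.le]

lemma integral_arcsineMeasure (g : ℝ → ℝ) :
    ∫ t, g t ∂arcsineMeasure = (∫ θ in -(π / 2)..π / 2, g (sin θ)) / π := by
  calc ∫ t, g t ∂arcsineMeasure = ∫ t in Icc (-1) 1, arcsineDensity t * g t := by
        rw [arcsineMeasure_eq_withDensity,
          integral_withDensity_ofReal measurable_arcsineDensity arcsineDensity_nonneg,
          setIntegral_eq_integral_of_forall_compl_eq_zero]
        intro t ht
        have : ¬ |t| < 1 := fun h => ht (Ioo_subset_Icc_self (abs_lt.1 h))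
        simp [arcsineDensity, this]
    _ = ∫ θ in Icc (-(π / 2)) (π / 2), |cos θ| • (arcsineDensity (sin θ) * g (sin θ)) := by
        rw [← bijOn_sin.image_eq]
        exact integral_image_eq_integral_abs_deriv_smul measurableSet_Icc
          (fun θ _ => (hasDerivAt_sin θ).hasDerivWithinAt) injOn_sin _
    _ = ∫ θ in Ioo (-(π / 2)) (π / 2), g (sin θ) / π := by
        rw [integral_Icc_eq_integral_Ioo]
        refine setIntegral_congr_fun measurableSet_Ioo fun θ hθ => ?_
        have hcos : 0 < cos θ := cos_pos_of_mem_Ioo hθ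
        rw [smul_eq_mul, arcsineDensity_sin hθ, abs_of_pos hcos]
        field_simp
    _ = (∫ θ in -(π / 2)..π / 2, g (sin θ)) / π := by
        rw [intervalIntegral.integral_of_le (by linarith [pi_pos]), integral_Ioc_eq_integral_Ioo,
          integral_div]

lemma integral_arcsineMeasure_id : ∫ t, t ∂arcsineMeasure = 0 := by
  simp [integral_arcsineMeasure]

lemma integral_arcsineMeasure_one : ∫ _, (1 : ℝ) ∂arcsineMeasure = 1 := by
  rw [integral_arcsineMeasure]
  simp [pi_ne_zero]

lemma integral_pow_add_two_arcsineMeasure (n : ℕ) :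
    ∫ t, t ^ (n + 2) ∂arcsineMeasure = (n + 1) / (n + 2) * ∫ t, t ^ n ∂arcsineMeasure := by
  simp only [integral_arcsineMeasure, integral_sin_pow, cos_neg, cos_pi_div_two]
  ring

lemma integral_sq_arcsineMeasure : ∫ t, t ^ 2 ∂arcsineMeasure = 1 / 2 := by
  rw [integral_pow_add_two_arcsineMeasure 0]
  simp only [pow_zero, integral_arcsineMeasure_one]
  norm_num

lemma integral_pow_four_arcsineMeasure : ∫ t, t ^ 4 ∂arcsineMeasure = 3 / 8 := by
  rw [integral_pow_add_two_arcsineMeasure 2, integral_sq_arcsineMeasure]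
  norm_num

lemma ae_abs_le_one_arcsineMeasure : ∀ᵐ t ∂arcsineMeasure, |t| ≤ 1 := by
  rw [arcsineMeasure_eq_withDensity,
    ae_withDensity_iff measurable_arcsineDensity.ennreal_ofReal]
  refine ae_of_all _ fun t ht => ?_
  by_contra h
  simp [arcsineDensity, (not_le.1 h).not_gt] at ht

noncomputable def nakagamiDensity (m z : ℝ) : ℝ :=
  if 0 ≤ z then 2 * m ^ m * z ^ (2 * m - 1) * exp (-m * z ^ 2) / Gamma m else 0

lemma nakagamiMeasure_eq_withDensity (m : ℝ) :
    nakagamiMeasure m = volume.withDensity fun z => ENNReal.ofReal (nakagamiDensity m z) := rfl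

lemma measurable_nakagamiDensity (m : ℝ) : Measurable (nakagamiDensity m) :=
  Measurable.ite measurableSet_Ici (by fun_prop) measurable_const

lemma nakagamiDensity_nonneg {m : ℝ} (hm : 0 < m) (z : ℝ) : 0 ≤ nakagamiDensity m z := by
  unfold nakagamiDensity
  split
  · have := Gamma_pos_of_pos hm
    positivity
  · exact le_rfl

lemma integral_pow_nakagamiMeasure {m : ℝ} (hm : 0 < m) (j : ℕ) :
    ∫ z, z ^ j ∂nakagamiMeasure m = Gamma (m + j / 2) / (Gamma m * m ^ ((j : ℝ) / 2)) := by
  have hq : -1 < 2 * m - 1 + j := by have := j.cast_nonneg (α := ℝ); linarith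
  calc ∫ z, z ^ j ∂nakagamiMeasure m = ∫ z in Ioi 0, nakagamiDensity m z * z ^ j := by
        rw [nakagamiMeasure_eq_withDensity, integral_withDensity_ofReal
          (measurable_nakagamiDensity m) (nakagamiDensity_nonneg hm),
          ← integral_Ici_eq_integral_Ioi, setIntegral_eq_integral_of_forall_compl_eq_zero]
        intro z hz
        simp [nakagamiDensity, show ¬ 0 ≤ z from hz]
    _ = ∫ z in Ioi 0, 2 * m ^ m / Gamma m * (z ^ (2 * m - 1 + j) * exp (-m * z ^ (2 : ℝ))) := by
        refine setIntegral_congr_fun measurableSet_Ioi fun z (hz : 0 < z) => ?_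
        rw [nakagamiDensity, if_pos hz.le, rpow_add hz, rpow_natCast, rpow_two]
        ring
    _ = _ := by
        rw [integral_const_mul, integral_rpow_mul_exp_neg_mul_rpow two_pos hq hm,
          show (2 * m - 1 + j + 1) / 2 = m + j / 2 by ring,
          show -(2 * m - 1 + j + 1) / 2 = -m + -(j / 2) by ring, rpow_add hm, rpow_neg hm.le,
          rpow_neg hm.le]
        have := Gamma_pos_of_pos hm
        field_simp

lemma integral_sq_nakagamiMeasure {m : ℝ} (hm : 0 < m) : ∫ z, z ^ 2 ∂nakagamiMeasure m = 1 := by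
  rw [integral_pow_nakagamiMeasure hm, show m + (2 : ℕ) / 2 = m + 1 by norm_num,
    Gamma_add_one hm.ne']
  have := Gamma_pos_of_pos hm
  norm_num
  field_simp

lemma integral_pow_four_nakagamiMeasure {m : ℝ} (hm : 0 < m) :
    ∫ z, z ^ 4 ∂nakagamiMeasure m = (1 + m) / m := by
  rw [integral_pow_nakagamiMeasure hm, show m + (4 : ℕ) / 2 = m + 1 + 1 by norm_num; ring,
    Gamma_add_one (by positivity), Gamma_add_one hm.ne']
  have := Gamma_pos_of_pos hm
  norm_num
  field_simp
  ring

lemma integral_rademacherMeasure (g : ℝ → ℝ) :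
    ∫ t, g t ∂rademacherMeasure = (g (-1) + g 1) / 2 := by
  rw [rademacherMeasure, integral_add_measure, integral_smul_measure, integral_smul_measure,
    integral_dirac, integral_dirac]
  · norm_num; ring
  all_goals exact (integrable_dirac enorm_lt_top).smul_measure (by norm_num)

end Laws

theorem stmt_2_general {Ω : Type*} [MeasurableSpace Ω] (P : Measure Ω) [IsProbabilityMeasure P]
    (β : ℕ) (m : ℝ) (hm : 1 ≤ m)
    (x : Fin β → Ω → ℝ) (d h : Ω → ℝ)
    (hxmeas : ∀ k, Measurable (x k)) (hdmeas : Measurable d) (hhmeas : Measurable h)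
    (hxlaw : ∀ k, Measure.map (x k) P = arcsineMeasure)
    (hdlaw : Measure.map d P = rademacherMeasure)
    (hhlaw : Measure.map h P = nakagamiMeasure m)
    (hindep : iIndepFun (Sum.elim x ![d, h]) P)
    (Y : Ω → ℝ) (hY : Y = fun ω => h ω * (1 + d ω) * ∑ k, x k ω)
    (ε₁ ε₂ : ℝ) :
    ε₁ * (∫ ω, Y ω ^ 2 ∂P) + ε₂ * (∫ ω, Y ω ^ 4 ∂P)
      = ε₁ * (β : ℝ) + ε₂ * (3 * (1 + m) / m) * (β : ℝ) * (2 * (β : ℝ) - 1) := by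
  have hm0 : 0 < m := by linarith
  have hxmom (k : Fin β) (n : ℕ) : ∫ ω, x k ω ^ n ∂P = ∫ t, t ^ n ∂arcsineMeasure :=
    HasLaw.integral_comp ⟨(hxmeas k).aemeasurable, hxlaw k⟩ (f := fun t => t ^ n) (by fun_prop)
  have hxL4 (k : Fin β) : MemLp (x k) 4 P :=
    .of_bound (hxmeas k).aestronglyMeasurable 1 <| by
      simpa using ae_of_ae_map (hxmeas k).aemeasurable
        ((hxlaw k).symm ▸ ae_abs_le_one_arcsineMeasure)
  have hx : iIndepFun x P := hindep.precomp (g := Sum.inl) Sum.inl_injective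
  have hmean (k : Fin β) : ∫ ω, x k ω ∂P = 0 := by
    simpa [integral_arcsineMeasure_id] using hxmom k 1
  have hvar (k : Fin β) : ∫ ω, x k ω ^ 2 ∂P = 1 / 2 :=
    (hxmom k 2).trans integral_sq_arcsineMeasure
  have hdmom (j : ℕ) : ∫ ω, (1 + d ω) ^ j ∂P = ((1 + -1) ^ j + (1 + 1) ^ j) / 2 :=
    (HasLaw.integral_comp ⟨hdmeas.aemeasurable, hdlaw⟩ (f := fun t => (1 + t) ^ j)
      (by fun_prop)).trans (integral_rademacherMeasure _)
  have hhmom (j : ℕ) : ∫ ω, h ω ^ j ∂P = ∫ z, z ^ j ∂nakagamiMeasure m :=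
    HasLaw.integral_comp ⟨hhmeas.aemeasurable, hhlaw⟩ (f := fun t => t ^ j) (by fun_prop)
  subst hY
  rw [integral_correlator_pow hxmeas hdmeas hhmeas hindep,
    integral_correlator_pow hxmeas hdmeas hhmeas hindep,
    integral_finsetSum_pow_two hx hxmeas (fun k => (hxL4 k).mono_exponent (by norm_num))
      hmean hvar,
    integral_finsetSum_pow_four hx hxmeas hxL4 hmean hvar
      (fun k => (hxmom k 4).trans integral_pow_four_arcsineMeasure),
    hdmom, hdmom, hhmom, hhmom, integral_sq_nakagamiMeasure hm0,
    integral_pow_four_nakagamiMeasure hm0, card_univ, Fintype.card_fin]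
  field_simp
  ring

/-- harvested DC of the correlator output Y = h·(1+d)·Σ x_k of a
DCSK symbol over a unit-mean-power Nakagami-m channel:
ε₁E[Y²] + ε₂E[Y⁴] = ε₁β + ε₂(3(1+m)/m)β(2β−1). -/
theorem stmt_2 {Ω : Type*} [MeasurableSpace Ω] (P : Measure Ω) [IsProbabilityMeasure P]
    (β : ℕ) (hβ : 0 < β) (m : ℝ) (hm : 1 ≤ m)
    (x : Fin β → Ω → ℝ) (d h : Ω → ℝ)
    (hxmeas : ∀ k, Measurable (x k)) (hdmeas : Measurable d) (hhmeas : Measurable h)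
    (hxlaw : ∀ k, Measure.map (x k) P = arcsineMeasure)
    (hdlaw : Measure.map d P = rademacherMeasure)
    (hhlaw : Measure.map h P = nakagamiMeasure m)
    (hindep : iIndepFun (Sum.elim x ![d, h]) P)
    (Y : Ω → ℝ) (hY : Y = fun ω => h ω * (1 + d ω) * ∑ k, x k ω)
    (ε₁ ε₂ : ℝ) :
    ε₁ * (∫ ω, Y ω ^ 2 ∂P) + ε₂ * (∫ ω, Y ω ^ 4 ∂P)
      = ε₁ * (β : ℝ) + ε₂ * (3 * (1 + m) / m) * (β : ℝ) * (2 * (β : ℝ) - 1) :=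
  stmt_2_general P β m hm x d h hxmeas hdmeas hhmeas hxlaw hdlaw hhlaw hindep Y hY ε₁ ε₂
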